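/- arXiv:1602.07929 — 3 statements merged into one kernel-verified Lean document; each statement's English description precedes it below -/
import Mathlib

section
/- Let n ≥ 1 with n ∈ N_B and n+1 ∉ N_B, and let α_1,…,α_n ∈ {0,1,…,s−1} with α_n ≠ 0. Then the quasi-nega-s values of the following two digit sequences are equal: the sequence with digits α_1,…,α_{n−1}, s−1−α_n at position n, 0 at position n+1, and β_k at every position k ≥ n+2; and the sequence with digits α_1,…,α_{n−1}, s−α_n at position n, s−1 at position n+1, and γ_k at every position k ≥ n+2. -/
open scoped Classical BigOperators

/-- Sign of the `n`-th term: `-1` if `n ∈ N_B`, `+1` otherwise. -/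
noncomputable def eps (B : Set ℕ+) (n : ℕ+) : ℝ := if n ∈ B then -1 else 1

/-- The quasi-nega-s value of a digit sequence `α`:
`S(α) = Σ_{n≥1} ε_n α_n / s^n`. -/
noncomputable def qnsVal (s : ℕ) (B : Set ℕ+) (α : ℕ+ → ℕ) : ℝ :=
  ∑' n : ℕ+, eps B n * (α n : ℝ) / (s : ℝ) ^ (n : ℕ)

/-! The two sequences differ by `+1` at position `n` (where `ε_n = -1`) and by `-(s-1)` in
every later signed digit `ε_k α_k`, whatever `B` is. Hence their values differ by
`s⁻ⁿ - (s-1) Σ_{k>n} s⁻ᵏ = 0`. -/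

noncomputable def betaTailDigits (s : ℕ) (B : Set ℕ+) (n : ℕ+) (α : ℕ+ → ℕ) : ℕ+ → ℕ := fun k =>
  if k < n then α k else if k = n then s - 1 - α n
  else if k = n + 1 then 0
  else if k ∈ B then s - 1 else 0

noncomputable def gammaTailDigits (s : ℕ) (B : Set ℕ+) (n : ℕ+) (α : ℕ+ → ℕ) : ℕ+ → ℕ := fun k =>
  if k < n then α k else if k = n then s - α n
  else if k = n + 1 then s - 1
  else if k ∉ B then s - 1 else 0

lemma betaTailDigits_le {s : ℕ} {B : Set ℕ+} {n : ℕ+} {α : ℕ+ → ℕ} (hα : ∀ k, α k < s)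
    (k : ℕ+) : betaTailDigits s B n α k ≤ s := by
  have := hα k
  unfold betaTailDigits
  split_ifs <;> omega

lemma gammaTailDigits_le {s : ℕ} {B : Set ℕ+} {n : ℕ+} {α : ℕ+ → ℕ} (hα : ∀ k, α k < s)
    (k : ℕ+) : gammaTailDigits s B n α k ≤ s := by
  have := hα k
  unfold gammaTailDigits
  split_ifs <;> omega

lemma summable_pnat_geometric {r : ℝ} (h₀ : 0 ≤ r) (h₁ : r < 1) :
    Summable fun k : ℕ+ => r ^ (k : ℕ) :=
  (summable_geometric_of_lt_one h₀ h₁).comp_injective PNat.coe_injective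

lemma summable_qnsVal {s : ℕ} (hs : 1 < s) (B : Set ℕ+) {D : ℕ+ → ℕ} {C : ℕ}
    (hD : ∀ k, D k ≤ C) :
    Summable fun k : ℕ+ => eps B k * (D k : ℝ) / (s : ℝ) ^ (k : ℕ) := by
  have hs' : (1 : ℝ) < s := by exact_mod_cast hs
  have hgeom := summable_pnat_geometric (by positivity) (inv_lt_one_of_one_lt₀ hs')
  refine Summable.of_norm_bounded (hgeom.mul_left (C : ℝ)) fun k ↦ ?_
  have heps : |eps B k| = 1 := by unfold eps; split_ifs <;> simp
  rw [Real.norm_eq_abs, abs_div, abs_mul, heps, one_mul, Nat.abs_cast, abs_pow, Nat.abs_cast,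
    inv_pow, ← div_eq_mul_inv]
  gcongr
  exact_mod_cast hD k

lemma hasSum_tail_pnat {s : ℝ} (hs : 1 < s) (n : ℕ+) :
    HasSum (fun k : ℕ+ => if n < k then (s - 1) / s ^ (k : ℕ) else 0) (1 / s ^ (n : ℕ)) := by
  set shift : ℕ → ℕ+ := fun j => ⟨n + 1 + j, by omega⟩
  have hshift : Function.Injective shift := fun i j hij => by
    have := congrArg PNat.val hij
    simp only [shift, PNat.mk_coe] at this
    omega
  refine (hshift.hasSum_iff fun k hk => ?_).mp ?_
  · rw [if_neg]
    refine fun hnk => hk ⟨k - n - 1, PNat.coe_injective ?_⟩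
    have : (n : ℕ) < k := hnk
    simp only [shift, PNat.mk_coe]
    omega
  · have hs₀ : 0 < s := by linarith
    have hgeom := (hasSum_geometric_of_lt_one (by positivity) (inv_lt_one_of_one_lt₀ hs)).mul_left
      ((s - 1) / s ^ ((n : ℕ) + 1))
    have hterms : (fun k : ℕ+ => if n < k then (s - 1) / s ^ (k : ℕ) else 0) ∘ shift =
        fun j => (s - 1) / s ^ ((n : ℕ) + 1) * s⁻¹ ^ j := by
      funext j
      have hnj : n < shift j := by
        change (n : ℕ) < n + 1 + j
        omega
      rw [Function.comp_apply, if_pos hnj]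
      simp only [shift, PNat.mk_coe, pow_add, inv_pow]
      field_simp
    have hsum : (s - 1) / s ^ ((n : ℕ) + 1) * (1 - s⁻¹)⁻¹ = 1 / s ^ (n : ℕ) := by
      have : s - 1 ≠ 0 := by linarith
      field_simp
      ring
    rwa [hterms, ← hsum]

lemma eps_mul_betaTailDigits_sub_gammaTailDigits {s : ℕ} {B : Set ℕ+} {n : ℕ+} (hn : n ∈ B)
    (hn1 : n + 1 ∉ B) {α : ℕ+ → ℕ} (hαn : α n < s) (k : ℕ+) :
    eps B k * ((betaTailDigits s B n α k : ℝ) - gammaTailDigits s B n α k) =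
      if k = n then 1 else if n < k then -((s : ℝ) - 1) else 0 := by
  have hs1 : ((s - 1 : ℕ) : ℝ) = s - 1 := Nat.cast_pred (by omega)
  rcases lt_trichotomy k n with hkn | rfl | hnk
  · simp [betaTailDigits, gammaTailDigits, hkn, hkn.ne, hkn.not_gt]
  · rw [betaTailDigits, gammaTailDigits, Nat.sub_right_comm]
    simp only [lt_irrefl, if_false, if_true, eps, hn, Nat.cast_pred (Nat.sub_pos_of_lt hαn)]
    ring
  · simp only [betaTailDigits, gammaTailDigits, hnk.not_gt, hnk.ne', hnk, if_false, if_true]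
    by_cases hk1 : k = n + 1
    · simp [hk1, eps, hn1, hs1]
    · by_cases hkB : k ∈ B <;> simp [hk1, eps, hkB, hs1]

theorem quasiNegaS_two_reps_mem_notMem_general (s : ℕ) (hs : 2 ≤ s) (B : Set ℕ+)
    (n : ℕ+) (hn : n ∈ B) (hn1 : n + 1 ∉ B)
    (α : ℕ+ → ℕ) (hα : ∀ k, α k < s) :
    qnsVal s B (fun k =>
        if k < n then α k else if k = n then s - 1 - α n
        else if k = n + 1 then 0
        else if k ∈ B then s - 1 else 0)
      = qnsVal s B (fun k =>
        if k < n then α k else if k = n then s - α n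
        else if k = n + 1 then s - 1
        else if k ∉ B then s - 1 else 0) := by
  change qnsVal s B (betaTailDigits s B n α) = qnsVal s B (gammaTailDigits s B n α)
  have hβ := (summable_qnsVal hs B (betaTailDigits_le (B := B) (n := n) hα)).hasSum
  have hγ := (summable_qnsVal hs B (gammaTailDigits_le (B := B) (n := n) hα)).hasSum
  have hs' : (1 : ℝ) < s := by exact_mod_cast hs
  have hdiff := (hasSum_ite_eq n (1 / (s : ℝ) ^ (n : ℕ))).sub (hasSum_tail_pnat hs' n)
  rw [sub_self] at hdiff
  refine sub_eq_zero.mp ((hβ.sub hγ).unique (hdiff.congr_fun fun k => ?_))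
  rw [← sub_div, ← mul_sub, eps_mul_betaTailDigits_sub_gammaTailDigits hn hn1 (hα n)]
  rcases eq_or_ne k n with rfl | hkn
  · simp
  · simp only [hkn, if_false]
    split_ifs <;> ring

/-- Case `n ∈ N_B`, `n+1 ∉ N_B`: the two indicated digit sequences have equal
quasi-nega-s values. -/
theorem quasiNegaS_two_reps_mem_notMem (s : ℕ) (hs : 2 ≤ s) (B : Set ℕ+)
    (n : ℕ+) (hn : n ∈ B) (hn1 : n + 1 ∉ B)
    (α : ℕ+ → ℕ) (hα : ∀ k, α k < s) (hαn : α n ≠ 0) :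
    qnsVal s B (fun k =>
        if k < n then α k else if k = n then s - 1 - α n
        else if k = n + 1 then 0
        else if k ∈ B then s - 1 else 0)
      = qnsVal s B (fun k =>
        if k < n then α k else if k = n then s - α n
        else if k = n + 1 then s - 1
        else if k ∉ B then s - 1 else 0) :=
  quasiNegaS_two_reps_mem_notMem_general s hs B n hn hn1 α hα
end

section
/- Let n ≥ 1 with n ∉ N_B and n+1 ∉ N_B, and let α_1,…,α_n ∈ {0,1,…,s−1} with α_n ≠ 0. Then the quasi-nega-s values of the following two digit sequences are equal: the sequence with digits α_1,…,α_{n−1}, α_n at position n, 0 at position n+1, and β_k at every position k ≥ n+2; and the sequence with digits α_1,…,α_{n−1}, α_n−1 at position n, s−1 at position n+1, and γ_k at every position k ≥ n+2. -/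
open scoped Classical BigOperators

/-!
The two sequences agree before position `n`. Since `ε_n = ε_{n+1} = 1` and
`ε_k (β_k - γ_k) = -(s - 1)` whatever the sign `ε_k`, the signed digit differences are `1` at
position `n` and `-(s - 1)` at every later position, so the values differ by
`s⁻ⁿ - ∑_{k > n} (s - 1) / sᵏ = 0`: the base-`s` analogue of `0.999… = 1`.
-/

theorem hasSum_ite_lt_sub_one_div_pow {s : ℝ} (hs : 1 < s) (n : ℕ) :
    HasSum (fun m : ℕ => if n < m then (s - 1) / s ^ m else 0) (s ^ n)⁻¹ := by
  have hs1 : s - 1 ≠ 0 := by linarith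
  rw [← hasSum_nat_add_iff' (n + 1),
    Finset.sum_eq_zero fun i hi => if_neg (by simpa using Finset.mem_range.mp hi), sub_zero]
  have hgeom := (hasSum_geometric_of_lt_one (inv_nonneg.mpr (by positivity))
    (inv_lt_one_of_one_lt₀ hs)).mul_left ((s - 1) / s ^ (n + 1))
  have hval : (s - 1) / s ^ (n + 1) * (1 - s⁻¹)⁻¹ = (s ^ n)⁻¹ := by
    field_simp
    ring
  refine hval ▸ hgeom.congr_fun fun i => ?_
  rw [if_pos (by omega), inv_pow, add_comm i, pow_add]
  field_simp

theorem hasSum_pnat_ite_lt_sub_one_div_pow {s : ℝ} (hs : 1 < s) (n : ℕ) :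
    HasSum (fun k : ℕ+ => if n < (k : ℕ) then (s - 1) / s ^ (k : ℕ) else 0) (s ^ n)⁻¹ :=
  hasSum_pnat_iff (f := fun m : ℕ => if n < m then (s - 1) / s ^ m else 0) |>.mpr <| by
    simpa only [Nat.not_lt_zero, if_false, add_zero] using hasSum_ite_lt_sub_one_div_pow hs n

theorem hasSum_qnsVal {s : ℕ} (hs : 1 < s) (B : Set ℕ+) {α : ℕ+ → ℕ} {C : ℕ}
    (hα : ∀ k, α k ≤ C) :
    HasSum (fun k : ℕ+ => eps B k * (α k : ℝ) / (s : ℝ) ^ (k : ℕ)) (qnsVal s B α) := by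
  have hr : (s : ℝ)⁻¹ < 1 := inv_lt_one_of_one_lt₀ (by exact_mod_cast hs)
  refine (Summable.of_norm_bounded (g := fun k : ℕ+ => (C : ℝ) * ((s : ℝ)⁻¹) ^ (k : ℕ))
    ?_ fun k => ?_).hasSum
  · exact summable_pnat_iff_summable_nat.mpr
      ((summable_geometric_of_lt_one (by positivity) hr).mul_left _)
  · have : |eps B k| = 1 := by unfold eps; split_ifs <;> simp
    rw [norm_div, norm_mul, Real.norm_eq_abs, this, one_mul, inv_pow, ← div_eq_mul_inv]
    simp only [Real.norm_natCast, norm_pow]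
    gcongr
    exact_mod_cast hα k

theorem qnsVal_eq_of_eps_mul_sub_eq {s : ℕ} (hs : 1 < s) (B : Set ℕ+) {a b : ℕ+ → ℕ} {C : ℕ}
    (ha : ∀ k, a k ≤ C) (hb : ∀ k, b k ≤ C) (n : ℕ+)
    (hab : ∀ k, eps B k * ((a k : ℝ) - b k) =
      (if k = n then 1 else 0) - (if (n : ℕ) < k then (s : ℝ) - 1 else 0)) :
    qnsVal s B a = qnsVal s B b := by
  have hD : HasSum (fun k : ℕ+ => (if k = n then ((s : ℝ) ^ (n : ℕ))⁻¹ else 0) -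
      (if (n : ℕ) < k then ((s : ℝ) - 1) / (s : ℝ) ^ (k : ℕ) else 0)) 0 := by
    simpa only [sub_self] using (hasSum_ite_eq n ((s : ℝ) ^ (n : ℕ))⁻¹).sub
      (hasSum_pnat_ite_lt_sub_one_div_pow (Nat.one_lt_cast.mpr hs) n)
  refine (hasSum_qnsVal hs B ha).unique (add_zero (qnsVal s B b) ▸
    ((hasSum_qnsVal hs B hb).add hD).congr_fun fun k => ?_)
  rw [← sub_eq_iff_eq_add', ← sub_div, ← mul_sub, hab k]
  split_ifs with hkn <;> subst_vars <;> ring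

/-- Case `n ∉ N_B`, `n+1 ∉ N_B`: the two indicated digit sequences have equal
quasi-nega-s values. -/
theorem quasiNegaS_two_reps_notMem_notMem (s : ℕ) (hs : 2 ≤ s) (B : Set ℕ+)
    (n : ℕ+) (hn : n ∉ B) (hn1 : n + 1 ∉ B)
    (α : ℕ+ → ℕ) (hα : ∀ k, α k < s) (hαn : α n ≠ 0) :
    qnsVal s B (fun k =>
        if k < n then α k else if k = n then α n
        else if k = n + 1 then 0
        else if k ∈ B then s - 1 else 0)
      = qnsVal s B (fun k =>
        if k < n then α k else if k = n then α n - 1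
        else if k = n + 1 then s - 1
        else if k ∉ B then s - 1 else 0) := by
  have hαn_lt := hα n
  refine qnsVal_eq_of_eps_mul_sub_eq (C := s) (by omega) B
    (fun k => by have := hα k; split_ifs <;> omega)
    (fun k => by have := hα k; split_ifs <;> omega) n fun k => ?_
  have hs1 : ((s - 1 : ℕ) : ℝ) = s - 1 := by rw [Nat.cast_sub (by omega), Nat.cast_one]
  rcases lt_trichotomy k n with hk | rfl | hk
  · simp [hk, hk.ne, hk.not_gt]
  · simp [eps, hn, Nat.cast_sub (Nat.one_le_iff_ne_zero.mpr hαn)]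
  · have hk' : (n : ℕ) < k := hk
    by_cases hk1 : k = n + 1
    · subst hk1
      simp [eps, hn1, hs1, hk.ne', hk.not_gt]
    · by_cases hkB : k ∈ B <;> simp [eps, hkB, hk1, hk.ne', hk.not_gt, hk', hs1]
end

section
/- Let c_1,…,c_n ∈ {0,1,…,s−1} with c_n ≤ s−2. If n ∉ N_B then sup Δ(c_1…c_{n−1}c_n) = inf Δ(c_1…c_{n−1}(c_n+1)), while if n ∈ N_B then inf Δ(c_1…c_{n−1}c_n) = sup Δ(c_1…c_{n−1}(c_n+1)). -/
open scoped Classical BigOperators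

/-- The cylinder of rank `n` with base `c_1 … c_n`. -/
def cylinder (s : ℕ) (B : Set ℕ+) (n : ℕ+) (c : ℕ+ → ℕ) : Set ℝ :=
  {x | ∃ α : ℕ+ → ℕ, (∀ k, α k < s) ∧ (∀ i, i ≤ n → α i = c i) ∧ qnsVal s B α = x}

/-!
The supremum and infimum of a cylinder are attained at the two extremal continuations of its
base: past rank `n`, take digit `s - 1` where the sign is `+1` and digit `0` where it is `-1`
(or the other way round). Two computations then give the theorem: every cylinder of rank `n`
has diameter `(s - 1) ∑_{i > n} s⁻ⁱ = s⁻ⁿ`, and raising the `n`-th digit by one shifts the whole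
cylinder by `ε_n s⁻ⁿ`.
-/

open Function

section Digits

variable {s : ℕ} {B : Set ℕ+}

lemma summable_qnsTerm (hs : 1 < s) {α : ℕ+ → ℕ} (hα : ∀ k, α k < s) :
    Summable fun i : ℕ+ => eps B i * (α i : ℝ) / (s : ℝ) ^ (i : ℕ) := by
  have hs' : (1 : ℝ) < s := by exact_mod_cast hs
  have hgeo : Summable fun i : ℕ+ => (s : ℝ) * (1 / (s : ℝ)) ^ (i : ℕ) :=
    ((summable_geometric_of_lt_one (by positivity) ((div_lt_one (by linarith)).2 hs')).mul_left
      _).comp_injective PNat.coe_injective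
  refine Summable.of_norm_bounded hgeo fun i => ?_
  have heps : ‖eps B i‖ = 1 := by unfold eps; split_ifs <;> simp
  have hαi : (α i : ℝ) ≤ s := by exact_mod_cast (hα i).le
  rw [norm_div, norm_mul, heps, one_mul, Real.norm_natCast, norm_pow, Real.norm_natCast,
    one_div_pow, mul_one_div]
  gcongr

lemma qnsVal_le_qnsVal (hs : 1 < s) {α β : ℕ+ → ℕ} (hα : ∀ k, α k < s) (hβ : ∀ k, β k < s)
    (h : ∀ i, eps B i * α i ≤ eps B i * β i) : qnsVal s B α ≤ qnsVal s B β :=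
  (summable_qnsTerm hs hα).tsum_le_tsum
    (fun i => div_le_div_of_nonneg_right (h i) (by positivity)) (summable_qnsTerm hs hβ)

lemma qnsVal_sub_qnsVal (hs : 1 < s) {α β : ℕ+ → ℕ} (hα : ∀ k, α k < s)
    (hβ : ∀ k, β k < s) :
    qnsVal s B β - qnsVal s B α =
      ∑' i : ℕ+, eps B i * ((β i : ℝ) - α i) / (s : ℝ) ^ (i : ℕ) := by
  rw [qnsVal, qnsVal, ← (summable_qnsTerm hs hβ).tsum_sub (summable_qnsTerm hs hα)]
  congr 1 with i
  ring

lemma qnsVal_update (hs : 1 < s) {α : ℕ+ → ℕ} (hα : ∀ k, α k < s) (k : ℕ+) {v : ℕ}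
    (hv : v < s) :
    qnsVal s B (update α k v) =
      qnsVal s B α + eps B k * ((v : ℝ) - α k) / (s : ℝ) ^ (k : ℕ) := by
  have hupd : ∀ i, update α k v i < s := fun i => by
    rcases eq_or_ne i k with rfl | hi
    · simpa using hv
    · simpa [hi] using hα i
  rw [← sub_eq_iff_eq_add', qnsVal_sub_qnsVal hs hα hupd,
    tsum_eq_single k fun i hi => by simp [hi], update_self]

lemma hasSum_tail_geometric (hs : 1 < s) (n : ℕ+) :
    HasSum (fun i : ℕ+ => if n < i then ((s : ℝ) - 1) / (s : ℝ) ^ (i : ℕ) else 0)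
      (1 / (s : ℝ) ^ (n : ℕ)) := by
  have hs' : (1 : ℝ) < s := by exact_mod_cast hs
  have hs0 : (s : ℝ) ≠ 0 := by positivity
  set tail : ℕ → ℕ+ := fun j => Nat.succPNat (n + j)
  have htail : Injective tail := fun a b h => by
    have := congrArg PNat.val h
    simp only [tail, Nat.succPNat_coe, Nat.succ_eq_add_one] at this
    omega
  rw [← htail.hasSum_iff]
  · have hgeo := (hasSum_geometric_of_lt_one (r := 1 / (s : ℝ)) (by positivity)
      ((div_lt_one (by linarith)).2 hs')).mul_left (((s : ℝ) - 1) / (s : ℝ) ^ ((n : ℕ) + 1))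
    have hterm : (fun i : ℕ+ => if n < i then ((s : ℝ) - 1) / (s : ℝ) ^ (i : ℕ) else 0) ∘ tail =
        fun j => ((s : ℝ) - 1) / (s : ℝ) ^ ((n : ℕ) + 1) * (1 / (s : ℝ)) ^ j := by
      funext j
      have hlt : n < tail j := by
        rw [← PNat.coe_lt_coe]; simp [tail]
      simp only [comp_apply, if_pos hlt, tail, Nat.succPNat_coe, Nat.succ_eq_add_one]
      rw [one_div_pow]
      field_simp
      ring
    have hsum : ((s : ℝ) - 1) / (s : ℝ) ^ ((n : ℕ) + 1) * (1 - 1 / (s : ℝ))⁻¹ =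
        1 / (s : ℝ) ^ (n : ℕ) := by
      have : (s : ℝ) - 1 ≠ 0 := by linarith
      rw [one_sub_div hs0, inv_div, pow_succ]
      field_simp
    rwa [hterm, ← hsum]
  · intro i hi
    rw [if_neg]
    rintro hni
    refine hi ⟨(i : ℕ) - n - 1, PNat.coe_injective ?_⟩
    have := PNat.coe_lt_coe _ _ |>.2 hni
    simp only [tail, Nat.succPNat_coe, Nat.succ_eq_add_one]
    omega

noncomputable def maxExtension (s : ℕ) (B : Set ℕ+) (n : ℕ+) (c : ℕ+ → ℕ) : ℕ+ → ℕ :=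
  fun i => if i ≤ n then c i else if i ∈ B then 0 else s - 1

noncomputable def minExtension (s : ℕ) (B : Set ℕ+) (n : ℕ+) (c : ℕ+ → ℕ) : ℕ+ → ℕ :=
  fun i => if i ≤ n then c i else if i ∈ B then s - 1 else 0

variable {n : ℕ+} {c : ℕ+ → ℕ}

lemma maxExtension_lt (hs : 0 < s) (hc : ∀ i, i ≤ n → c i < s) (k : ℕ+) :
    maxExtension s B n c k < s := by
  unfold maxExtension; split_ifs with hk <;> first | exact hc k hk | omega

lemma minExtension_lt (hs : 0 < s) (hc : ∀ i, i ≤ n → c i < s) (k : ℕ+) :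
    minExtension s B n c k < s := by
  unfold minExtension; split_ifs with hk <;> first | exact hc k hk | omega

lemma minExtension_update {k : ℕ+} (hk : k ≤ n) (v : ℕ) :
    minExtension s B n (update c k v) = update (minExtension s B n c) k v := by
  funext i
  rcases eq_or_ne i k with rfl | hi
  · simp [minExtension, hk]
  · simp [minExtension, hi]

lemma cast_le_cast_pred_of_lt {a : ℕ} (ha : a < s) : (a : ℝ) ≤ ((s - 1 : ℕ) : ℝ) := by
  exact_mod_cast Nat.le_sub_one_of_lt ha

lemma isGreatest_cylinder (hs : 1 < s) (hc : ∀ i, i ≤ n → c i < s) :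
    IsGreatest (cylinder s B n c) (qnsVal s B (maxExtension s B n c)) := by
  have hmax := maxExtension_lt (B := B) (by omega) hc
  refine ⟨⟨_, hmax, fun i hi => if_pos hi, rfl⟩, ?_⟩
  rintro _ ⟨α, hα, hαc, rfl⟩
  refine qnsVal_le_qnsVal hs hα hmax fun i => ?_
  by_cases hi : i ≤ n
  · simp [maxExtension, hi, hαc i hi]
  · have := cast_le_cast_pred_of_lt (hα i)
    unfold maxExtension eps
    split_ifs <;> simp [this]

lemma isLeast_cylinder (hs : 1 < s) (hc : ∀ i, i ≤ n → c i < s) :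
    IsLeast (cylinder s B n c) (qnsVal s B (minExtension s B n c)) := by
  have hmin := minExtension_lt (B := B) (by omega) hc
  refine ⟨⟨_, hmin, fun i hi => if_pos hi, rfl⟩, ?_⟩
  rintro _ ⟨α, hα, hαc, rfl⟩
  refine qnsVal_le_qnsVal hs hmin hα fun i => ?_
  by_cases hi : i ≤ n
  · simp [minExtension, hi, hαc i hi]
  · have := cast_le_cast_pred_of_lt (hα i)
    unfold minExtension eps
    split_ifs <;> simp [this]

lemma qnsVal_maxExtension_sub_minExtension (hs : 1 < s) (hc : ∀ i, i ≤ n → c i < s) :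
    qnsVal s B (maxExtension s B n c) - qnsVal s B (minExtension s B n c) =
      1 / (s : ℝ) ^ (n : ℕ) := by
  rw [qnsVal_sub_qnsVal hs (minExtension_lt (by omega) hc) (maxExtension_lt (by omega) hc)]
  refine ((hasSum_tail_geometric hs n).congr_fun fun i => ?_).tsum_eq
  by_cases hi : i ≤ n
  · simp [maxExtension, minExtension, hi, not_lt.2 hi]
  · have hcast : ((s - 1 : ℕ) : ℝ) = s - 1 := by rw [Nat.cast_pred (by omega)]
    simp only [maxExtension, minExtension, eps, if_neg hi, if_pos (not_le.1 hi)]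
    split_ifs <;> simp [hcast]

end Digits

/-- Adjacent cylinders: if `n ∉ N_B` the sup of one is the inf of the next, and
if `n ∈ N_B` the inf of one is the sup of the next. -/
theorem cylinder_adjacent (s : ℕ) (hs : 2 ≤ s) (B : Set ℕ+) (n : ℕ+) (c : ℕ+ → ℕ)
    (hc : ∀ i, i ≤ n → c i < s) (hcn : c n ≤ s - 2) :
    (n ∉ B →
      sSup (cylinder s B n c) =
        sInf (cylinder s B n (fun i => if i = n then c n + 1 else c i))) ∧
    (n ∈ B →
      sInf (cylinder s B n c) =
        sSup (cylinder s B n (fun i => if i = n then c n + 1 else c i))) := by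
  have hupdate : (fun i => if i = n then c n + 1 else c i) = update c n (c n + 1) := by
    funext i; by_cases hi : i = n <;> simp [hi]
  rw [hupdate]
  have hc' : ∀ i, i ≤ n → update c n (c n + 1) i < s := fun i hi => by
    by_cases hin : i = n
    · subst hin; rw [update_self]; omega
    · simpa [hin] using hc i hi
  have hshift : qnsVal s B (minExtension s B n (update c n (c n + 1))) =
      qnsVal s B (minExtension s B n c) + eps B n * (1 / (s : ℝ) ^ (n : ℕ)) := by
    rw [minExtension_update le_rfl, qnsVal_update hs (minExtension_lt (by omega) hc) n (by omega)]
    simp [minExtension, div_eq_mul_inv]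
  have hdiam := qnsVal_maxExtension_sub_minExtension (B := B) hs hc
  have hdiam' := qnsVal_maxExtension_sub_minExtension (B := B) hs hc'
  refine ⟨fun hn => ?_, fun hn => ?_⟩
  · rw [(isGreatest_cylinder hs hc).csSup_eq, (isLeast_cylinder hs hc').csInf_eq, hshift, eps,
      if_neg hn]
    linarith
  · rw [(isLeast_cylinder hs hc).csInf_eq, (isGreatest_cylinder hs hc').csSup_eq]
    rw [hshift, eps, if_pos hn] at hdiam'
    linarith
end
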